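/- For any two nontrivial connected finite simple graphs G and H, the cycle hull number of the lexicographic product G ∘ H equals 2. -/

import Mathlib

open SimpleGraph

variable {V α β : Type*}

/-- A set `S` is cycle convex in `G` if no vertex outside `S` lies on a cycle in the
subgraph induced by `S ∪ {w}`. -/
def CycleConvex (G : SimpleGraph V) (S : Set V) : Prop :=
  ∀ w : V, w ∉ S →
    ∀ c : (G.induce (insert w S)).Walk ⟨w, Set.mem_insert w S⟩ ⟨w, Set.mem_insert w S⟩,
      ¬ c.IsCycle

/-- The cycle convex hull of `S`: the smallest cycle convex set containing `S`. -/
def cycleHull (G : SimpleGraph V) (S : Set V) : Set V :=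
  ⋂₀ {T : Set V | S ⊆ T ∧ CycleConvex G T}

/-- The cycle hull number: minimum size of a set whose cycle convex hull is everything. -/
noncomputable def cycleHullNumber (G : SimpleGraph V) : ℕ :=
  sInf {n : ℕ | ∃ S : Set V, S.ncard = n ∧ cycleHull G S = Set.univ}

/-- The cycle convexity number: maximum size of a proper cycle convex set. -/
noncomputable def cycleConvexityNumber (G : SimpleGraph V) : ℕ :=
  sSup {n : ℕ | ∃ S : Set V, S.ncard = n ∧ CycleConvex G S ∧ S ≠ Set.univ}

/-- The independence number of a graph. -/
noncomputable def indepNumber (G : SimpleGraph V) : ℕ :=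
  sSup {n : ℕ | ∃ S : Set V, S.ncard = n ∧ S.Pairwise fun a b => ¬ G.Adj a b}

/-- The strong product of two simple graphs. -/
def strongProd (G : SimpleGraph α) (H : SimpleGraph β) : SimpleGraph (α × β) where
  Adj x y := (G.Adj x.1 y.1 ∧ x.2 = y.2) ∨ (x.1 = y.1 ∧ H.Adj x.2 y.2) ∨
    (G.Adj x.1 y.1 ∧ H.Adj x.2 y.2)
  symm := ⟨fun x y h => by
    rcases h with ⟨h1, h2⟩ | ⟨h1, h2⟩ | ⟨h1, h2⟩
    · exact Or.inl ⟨h1.symm, h2.symm⟩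
    · exact Or.inr (Or.inl ⟨h1.symm, h2.symm⟩)
    · exact Or.inr (Or.inr ⟨h1.symm, h2.symm⟩)⟩
  loopless := ⟨fun x h => by
    rcases h with ⟨h1, _⟩ | ⟨_, h2⟩ | ⟨h1, _⟩
    · exact G.irrefl h1
    · exact H.irrefl h2
    · exact G.irrefl h1⟩

/-- The lexicographic product of two simple graphs. -/
def lexProd (G : SimpleGraph α) (H : SimpleGraph β) : SimpleGraph (α × β) where
  Adj x y := G.Adj x.1 y.1 ∨ (x.1 = y.1 ∧ H.Adj x.2 y.2)
  symm := ⟨fun x y h => by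
    rcases h with h1 | ⟨h1, h2⟩
    · exact Or.inl h1.symm
    · exact Or.inr ⟨h1.symm, h2.symm⟩⟩
  loopless := ⟨fun x h => by
    rcases h with h1 | ⟨_, h2⟩
    · exact G.irrefl h1
    · exact H.irrefl h2⟩

/-!
Two vertices `(a, b₁)`, `(a, b₂)` with `b₁ ~ b₂` in `H` form a triangle in `G ∘ H` with every vertex
`(a', c)` such that `a ~ a'` in `G`. Hence a cycle convex set containing them contains the whole
fibre over `a'`, and from a full fibre the same argument fills every neighbouring fibre; by
connectivity of `G` it is everything. Conversely, a set with at most one vertex is cycle convex,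
since a cycle needs three vertices, so no hull set is smaller.
-/

namespace SimpleGraph

lemma Walk.IsCycle.three_le_card [Finite V] {G : SimpleGraph V} {u : V} {c : G.Walk u u}
    (hc : c.IsCycle) : 3 ≤ Nat.card V := by
  have := Fintype.ofFinite V
  rw [Nat.card_eq_fintype_card]
  have hlen := hc.support_nodup.length_le_card
  rw [List.length_tail, Walk.length_support, Nat.add_sub_cancel] at hlen
  exact hc.three_le_length.trans hlen

lemma isCycle_triangle {G : SimpleGraph V} {a b c : V}
    (hab : G.Adj a b) (hbc : G.Adj b c) (hca : G.Adj c a) :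
    (Walk.cons hab (Walk.cons hbc (Walk.cons hca Walk.nil))).IsCycle := by
  rw [Walk.cons_isCycle_iff]
  simp [hab.ne.symm, hbc.ne, hca.ne, hca.ne.symm]

lemma Preconnected.forall_of_adj {G : SimpleGraph V} (hG : G.Preconnected)
    {P : V → Prop} (hP : ∀ ⦃x y⦄, G.Adj x y → P x → P y) {u : V} (hu : P u) (v : V) : P v := by
  obtain ⟨p⟩ := hG u v
  induction p with
  | nil => exact hu
  | cons hxy _ ih => exact ih (hP hxy hu)

end SimpleGraph

section CycleConvexity

variable {G : SimpleGraph V}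

lemma CycleConvex.mem_of_adj_of_adj {S : Set V} (hS : CycleConvex G S) {u v w : V}
    (hu : u ∈ S) (hv : v ∈ S) (huv : G.Adj u v) (hwu : G.Adj w u) (hwv : G.Adj w v) :
    w ∈ S := by
  by_contra hw
  exact hS w hw _ (isCycle_triangle (G := G.induce (insert w S)) (a := ⟨w, Set.mem_insert w S⟩)
    (b := ⟨u, Set.mem_insert_of_mem w hu⟩) (c := ⟨v, Set.mem_insert_of_mem w hv⟩) hwu huv hwv.symm)

lemma cycleConvex_of_ncard_le_one [Finite V] {S : Set V} (hS : S.ncard ≤ 1) :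
    CycleConvex G S := by
  intro w _ c hc
  have hcard : Nat.card (insert w S : Set V) ≤ 2 :=
    (Set.ncard_insert_le w S).trans (by omega)
  have := hc.three_le_card
  omega

lemma cycleHull_subset {S T : Set V} (hST : S ⊆ T) (hT : CycleConvex G T) :
    cycleHull G S ⊆ T :=
  Set.sInter_subset_of_mem ⟨hST, hT⟩

lemma cycleHull_eq_univ_iff {S : Set V} :
    cycleHull G S = Set.univ ↔ ∀ T, S ⊆ T → CycleConvex G T → T = Set.univ := by
  refine ⟨fun h T hST hT => Set.eq_univ_of_univ_subset (h ▸ cycleHull_subset hST hT),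
    fun h => Set.eq_univ_of_forall fun x => Set.mem_sInter.2 fun T hT => ?_⟩
  rw [h T hT.1 hT.2]
  trivial

lemma two_le_ncard_of_cycleHull_eq_univ [Finite V] [Nontrivial V] {S : Set V}
    (hS : cycleHull G S = Set.univ) : 2 ≤ S.ncard := by
  by_contra! hlt
  have hS_univ : S = Set.univ :=
    (cycleHull_eq_univ_iff.1 hS) S subset_rfl (cycleConvex_of_ncard_le_one (by omega))
  have : 1 < Nat.card V := Finite.one_lt_card
  rw [hS_univ, Set.ncard_univ] at hlt
  omega

end CycleConvexity

section LexProd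

variable {G : SimpleGraph α} {H : SimpleGraph β} {T : Set (α × β)} {b₁ b₂ : β}

lemma CycleConvex.lexProd_mem_of_adj (hT : CycleConvex (lexProd G H) T) (hb : H.Adj b₁ b₂)
    {x y : α} (h₁ : (x, b₁) ∈ T) (h₂ : (x, b₂) ∈ T) (hxy : G.Adj x y) (c : β) : (y, c) ∈ T :=
  hT.mem_of_adj_of_adj h₁ h₂ (Or.inr ⟨rfl, hb⟩) (Or.inl hxy.symm) (Or.inl hxy.symm)

lemma CycleConvex.lexProd_eq_univ (hT : CycleConvex (lexProd G H) T) (hG : G.Preconnected)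
    (hb : H.Adj b₁ b₂) {a a' : α} (ha : G.Adj a a') (h₁ : (a, b₁) ∈ T) (h₂ : (a, b₂) ∈ T) :
    T = Set.univ := by
  have hfibre : ∀ x, ∀ c, (x, c) ∈ T :=
    hG.forall_of_adj (fun _ _ hxy hx => hT.lexProd_mem_of_adj hb (hx b₁) (hx b₂) hxy)
      (hT.lexProd_mem_of_adj hb h₁ h₂ ha)
  exact Set.eq_univ_of_forall fun p => hfibre p.1 p.2

lemma cycleHull_lexProd_pair_eq_univ (hG : G.Preconnected) (hb : H.Adj b₁ b₂) {a a' : α}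
    (ha : G.Adj a a') : cycleHull (lexProd G H) {(a, b₁), (a, b₂)} = Set.univ :=
  cycleHull_eq_univ_iff.2 fun _T hST hT => hT.lexProd_eq_univ hG hb ha
    (hST (Set.mem_insert _ _)) (hST (Set.mem_insert_of_mem _ rfl))

end LexProd

theorem stmt_1 [Fintype α] [Fintype β] (G : SimpleGraph α) (H : SimpleGraph β)
    [Nontrivial α] [Nontrivial β] (hG : G.Connected) (hH : H.Connected) :
    cycleHullNumber (lexProd G H) = 2 := by
  obtain ⟨a⟩ := hG.nonempty
  obtain ⟨a', ha⟩ := hG.preconnected.exists_adj_of_nontrivial a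
  obtain ⟨b₁⟩ := hH.nonempty
  obtain ⟨b₂, hb⟩ := hH.preconnected.exists_adj_of_nontrivial b₁
  have hpair : 2 ∈ {n | ∃ S : Set (α × β), S.ncard = n ∧ cycleHull (lexProd G H) S = Set.univ} :=
    ⟨_, Set.ncard_pair (by simp [hb.ne]), cycleHull_lexProd_pair_eq_univ hG.preconnected hb ha⟩
  refine le_antisymm (Nat.sInf_le hpair) (le_csInf ⟨2, hpair⟩ ?_)
  rintro n ⟨S, rfl, hS⟩
  exact two_le_ncard_of_cycleHull_eq_univ hS
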